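/- Define b₁, b₂, b₃ : ℝ → ℝ by: b₁(s) = e^{1/s} for s < 0 and b₁(s) = 0 otherwise; b₂(s) = e^{−1/(s(1−s))} for 0 < s < 1 and b₂(s) = 0 otherwise; b₃(s) = e^{−1/((s−1)(2−s))} for 1 < s < 2 and b₃(s) = 0 otherwise. If γ : ℝ → ℝ⁴ is a regular curve parametrized by arc length admitting a Bishop frame whose coefficient matrix has above-diagonal entries X₁₂ = b₁, X₁₃ = b₂, X₁₄ = b₃ (all other above-diagonal entries zero), then γ admits a generalized Bishop frame of type C. -/

import Mathlib

noncomputable section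

open Set

abbrev E4 : Type := EuclideanSpace ℝ (Fin 4)
abbrev Mat4 : Type := Matrix (Fin 4) (Fin 4) ℝ

/-- A matrix-valued map is smooth on `I` (entrywise). -/
def SmoothMat (I : Set ℝ) (Z : ℝ → Mat4) : Prop :=
  ∀ i j, ContDiffOn ℝ (⊤ : ℕ∞) (fun s => Z s i j) I

/-- `Z' = X · Z` on `I`, derivatives taken entrywise. -/
def MatDerivEq (I : Set ℝ) (Z X : ℝ → Mat4) : Prop :=
  ∀ s ∈ I, ∀ i j, deriv (fun t => Z t i j) s = (X s * Z s) i j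

/-- A regular curve parametrized by arc length on `I`. -/
def IsRegularCurve (I : Set ℝ) (γ : ℝ → E4) : Prop :=
  ContDiffOn ℝ (⊤ : ℕ∞) γ I ∧ ∀ s ∈ I, ‖deriv γ s‖ = 1

def IsTwoRegularCurve (I : Set ℝ) (γ : ℝ → E4) : Prop :=
  IsRegularCurve I γ ∧ ∀ s ∈ I, deriv (deriv γ) s ≠ 0

/-- An orthonormal frame on `γ`: smooth, orthogonal, first row the tangent vector. -/
def IsFrameOn (I : Set ℝ) (γ : ℝ → E4) (Z : ℝ → Mat4) : Prop :=
  SmoothMat I Z ∧ (∀ s ∈ I, Z s ∈ Matrix.orthogonalGroup (Fin 4) ℝ) ∧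
    ∀ s ∈ I, ∀ i, Z s 0 i = deriv γ s i

def ShapeB (X : Mat4) : Prop := X 1 2 = 0 ∧ X 1 3 = 0 ∧ X 2 3 = 0
def ShapeC (X : Mat4) : Prop := X 0 3 = 0 ∧ X 1 2 = 0 ∧ X 2 3 = 0
def ShapeD (X : Mat4) : Prop := X 0 2 = 0 ∧ X 0 3 = 0 ∧ X 2 3 = 0
def ShapeF (X : Mat4) : Prop := X 0 2 = 0 ∧ X 0 3 = 0 ∧ X 1 3 = 0

/-- `γ` admits a generalized Bishop frame whose coefficient matrix has the given shape. -/
def AdmitsFrame (Shape : Mat4 → Prop) (I : Set ℝ) (γ : ℝ → E4) : Prop :=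
  ∃ Z X : ℝ → Mat4, IsFrameOn I γ Z ∧ MatDerivEq I Z X ∧ ∀ s ∈ I, Shape (X s)

def bump₁' : ℝ → ℝ := fun s => if s < 0 then Real.exp (1 / s) else 0

def bump₂' : ℝ → ℝ := fun s =>
  if 0 < s ∧ s < 1 then Real.exp (-1 / (s * (1 - s))) else 0

def bump₃' : ℝ → ℝ := fun s =>
  if 1 < s ∧ s < 2 then Real.exp (-1 / ((s - 1) * (2 - s))) else 0

namespace TypeCProof

open Real Matrix

noncomputable def θf : ℝ → ℝ := fun s => (Real.pi / 2) * Real.smoothTransition s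

lemma θf_contDiff : ContDiff ℝ (⊤ : ℕ∞) θf :=
  contDiff_const.mul Real.smoothTransition.contDiff

noncomputable def dθ : ℝ → ℝ := fun s => deriv θf s

lemma hasDerivAt_θf (s : ℝ) : HasDerivAt θf (dθ s) s :=
  ((θf_contDiff.differentiable (by norm_num)) s).hasDerivAt

lemma sin_θf_of_nonpos {s : ℝ} (h : s ≤ 0) : Real.sin (θf s) = 0 := by
  simp [θf, Real.smoothTransition.zero_of_nonpos h]

lemma cos_θf_of_one_le {s : ℝ} (h : 1 ≤ s) : Real.cos (θf s) = 0 := by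
  simp [θf, Real.smoothTransition.one_of_one_le h, Real.cos_pi_div_two]

lemma key1 (s : ℝ) : bump₁' s * Real.sin (θf s) = 0 := by
  by_cases h : s < 0
  · rw [sin_θf_of_nonpos h.le, mul_zero]
  · simp [bump₁', h]

lemma key3 (s : ℝ) : bump₃' s * Real.cos (θf s) = 0 := by
  by_cases h : 1 < s
  · rw [cos_θf_of_one_le h.le, mul_zero]
  · have h' : ¬(1 < s ∧ s < 2) := fun hh => h hh.1
    simp [bump₃', h']

noncomputable def Rm (s : ℝ) : Mat4 :=
  !![1,0,0,0; 0, Real.cos (θf s), 0, Real.sin (θf s); 0,0,1,0;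
     0, -(Real.sin (θf s)), 0, Real.cos (θf s)]

noncomputable def RmT (s : ℝ) : Mat4 :=
  !![1,0,0,0; 0, Real.cos (θf s), 0, -(Real.sin (θf s)); 0,0,1,0;
     0, Real.sin (θf s), 0, Real.cos (θf s)]

noncomputable def Rd (s : ℝ) : Mat4 :=
  !![0,0,0,0; 0, -(dθ s * Real.sin (θf s)), 0, dθ s * Real.cos (θf s); 0,0,0,0;
     0, -(dθ s * Real.cos (θf s)), 0, -(dθ s * Real.sin (θf s))]

lemma RmT_mul_Rm (s : ℝ) : RmT s * Rm s = 1 := by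
  ext i j
  fin_cases i <;> fin_cases j <;>
    simp [Rm, RmT, Matrix.mul_apply, Fin.sum_univ_four, Matrix.vecHead, Matrix.vecTail] <;>
    nlinarith [Real.sin_sq_add_cos_sq (θf s)]

lemma Rm_mul_RmT (s : ℝ) : Rm s * RmT s = 1 := by
  ext i j
  fin_cases i <;> fin_cases j <;>
    simp [Rm, RmT, Matrix.mul_apply, Fin.sum_univ_four, Matrix.vecHead, Matrix.vecTail] <;>
    nlinarith [Real.sin_sq_add_cos_sq (θf s)]

lemma star_Rm (s : ℝ) : star (Rm s) = RmT s := by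
  ext i j
  fin_cases i <;> fin_cases j <;>
    simp [Rm, RmT, Matrix.star_apply, Matrix.vecHead, Matrix.vecTail]

lemma Rm_mem (s : ℝ) : Rm s ∈ Matrix.orthogonalGroup (Fin 4) ℝ := by
  rw [Matrix.mem_orthogonalGroup_iff]
  change Rm s * star (Rm s) = 1
  rw [star_Rm]
  exact Rm_mul_RmT s

lemma contDiff_Rm (i k : Fin 4) : ContDiff ℝ (⊤ : ℕ∞) (fun s => Rm s i k) := by
  have hc : ContDiff ℝ (⊤ : ℕ∞) fun s => Real.cos (θf s) := Real.contDiff_cos.comp θf_contDiff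
  have hs : ContDiff ℝ (⊤ : ℕ∞) fun s => Real.sin (θf s) := Real.contDiff_sin.comp θf_contDiff
  fin_cases i <;> fin_cases k <;>
    simp only [Rm, Matrix.cons_val', Matrix.cons_val_zero, Matrix.cons_val_one,
      Matrix.head_cons, Matrix.empty_val', Matrix.cons_val_fin_one, Matrix.head_fin_const,
      Matrix.cons_val_two, Matrix.cons_val_three, Matrix.tail_cons, Matrix.vecHead,
      Matrix.vecTail, Matrix.of_apply, Fin.isValue, Function.comp] <;>
    first
      | exact contDiff_const
      | exact hc
      | exact hs
      | exact hs.neg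

lemma hasDerivAt_Rm (s : ℝ) (i k : Fin 4) :
    HasDerivAt (fun t => Rm t i k) (Rd s i k) s := by
  have hc : HasDerivAt (fun t => Real.cos (θf t)) (-(dθ s * Real.sin (θf s))) s := by
    have h := (Real.hasDerivAt_cos (θf s)).comp s (hasDerivAt_θf s)
    exact h.congr_deriv (by ring)
  have hs' : HasDerivAt (fun t => Real.sin (θf t)) (dθ s * Real.cos (θf s)) s := by
    have h := (Real.hasDerivAt_sin (θf s)).comp s (hasDerivAt_θf s)
    exact h.congr_deriv (by ring)
  have hs'' : HasDerivAt (fun t => -(Real.sin (θf t))) (-(dθ s * Real.cos (θf s))) s := hs'.neg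
  fin_cases i <;> fin_cases k <;>
    simp only [Rm, Rd, Matrix.cons_val', Matrix.cons_val_zero, Matrix.cons_val_one,
      Matrix.head_cons, Matrix.empty_val', Matrix.cons_val_fin_one, Matrix.head_fin_const,
      Matrix.cons_val_two, Matrix.cons_val_three, Matrix.tail_cons, Matrix.vecHead,
      Matrix.vecTail, Matrix.of_apply, Fin.isValue, Function.comp] <;>
    first
      | exact hasDerivAt_const _ _
      | exact hc
      | exact hs'
      | exact hs''

end TypeCProof

/-- A regular curve with a Bishop frame of curvatures bump₁', bump₂', bump₃' admits a
generalized Bishop frame of type C. -/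
theorem typeC_example (γ : ℝ → E4) (hγ : IsRegularCurve Set.univ γ)
    (Z X : ℝ → Mat4) (hZ : IsFrameOn Set.univ γ Z) (hZX : MatDerivEq Set.univ Z X)
    (hshape : ∀ s, ShapeB (X s))
    (h₁ : ∀ s, X s 0 1 = bump₁' s) (h₂ : ∀ s, X s 0 2 = bump₂' s)
    (h₃ : ∀ s, X s 0 3 = bump₃' s) :
    AdmitsFrame ShapeC Set.univ γ := by
  classical
  open TypeCProof in
  obtain ⟨hZs, hZo, hZrow⟩ := hZ
  -- entrywise derivatives of Z
  have hZd : ∀ (i j : Fin 4) (s : ℝ), HasDerivAt (fun t => Z t i j) ((X s * Z s) i j) s := by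
    intro i j s
    have h := (((contDiffOn_univ.mp (hZs i j)).differentiable (by norm_num)) s).hasDerivAt
    rwa [hZX s (Set.mem_univ s) i j] at h
  -- orthogonality of Z
  have hZ1 : ∀ s : ℝ, Z s * star (Z s) = 1 := by
    intro s
    have h := hZo s (Set.mem_univ s)
    rw [Matrix.mem_orthogonalGroup_iff] at h
    exact h
  -- skewness of X
  have hskew : ∀ (s : ℝ) (i j : Fin 4), X s i j + X s j i = 0 := by
    intro s i j
    have hD : HasDerivAt (fun t => ∑ k, Z t i k * Z t j k)
        (∑ k, ((X s * Z s) i k * Z s j k + Z s i k * (X s * Z s) j k)) s :=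
      HasDerivAt.fun_sum fun k _ => (hZd i k s).mul (hZd j k s)
    have hconst : (fun t => ∑ k, Z t i k * Z t j k) = fun _ => (1 : Mat4) i j := by
      funext t
      calc ∑ k, Z t i k * Z t j k = (Z t * star (Z t)) i j := by
            simp [Matrix.mul_apply, Matrix.star_apply]
        _ = (1 : Mat4) i j := by rw [hZ1 t]
    have h0 : HasDerivAt (fun t => ∑ k, Z t i k * Z t j k) 0 s := by
      rw [hconst]; exact hasDerivAt_const _ _
    have hu := hD.unique h0
    have e1 : ∑ k, (X s * Z s) i k * Z s j k = X s i j := by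
      have e : ∑ k, (X s * Z s) i k * Z s j k = ((X s * Z s) * star (Z s)) i j := by
        simp [Matrix.mul_apply, Matrix.star_apply]
      rw [e, Matrix.mul_assoc, hZ1 s, Matrix.mul_one]
    have e2 : ∑ k, Z s i k * (X s * Z s) j k = X s j i := by
      have e : ∑ k, Z s i k * (X s * Z s) j k = ((X s * Z s) * star (Z s)) j i := by
        simp [Matrix.mul_apply, Matrix.star_apply, mul_comm]
      rw [e, Matrix.mul_assoc, hZ1 s, Matrix.mul_one]
    rw [Finset.sum_add_distrib, e1, e2] at hu
    linarith
  have h21 : ∀ s : ℝ, X s 2 1 = 0 := by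
    intro s
    have h := hskew s 1 2
    have h' := (hshape s).1
    linarith
  have h32 : ∀ s : ℝ, X s 3 2 = 0 := by
    intro s
    have h := hskew s 2 3
    have h' := (hshape s).2.2
    linarith
  refine ⟨fun s => Rm s * Z s, fun s => (Rd s + Rm s * X s) * RmT s, ⟨?_, ?_, ?_⟩, ?_, ?_⟩
  · -- smoothness
    intro i j
    have hsum : ContDiffOn ℝ (⊤ : ℕ∞) (fun s => ∑ k, Rm s i k * Z s k j) Set.univ :=
      ContDiffOn.sum fun k _ => ((contDiff_Rm i k).contDiffOn).mul (hZs k j)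
    simpa only [Matrix.mul_apply] using hsum
  · -- orthogonality
    intro s _
    exact mul_mem (Rm_mem s) (hZo s (Set.mem_univ s))
  · -- first row
    intro s _ i
    rw [← hZrow s (Set.mem_univ s) i]
    simp [Matrix.mul_apply, Fin.sum_univ_four, Rm, Matrix.vecHead, Matrix.vecTail]
  · -- derivative equation
    intro s _ i j
    have h1 : HasDerivAt (fun t => ∑ k, Rm t i k * Z t k j)
        (∑ k, (Rd s i k * Z s k j + Rm s i k * (X s * Z s) k j)) s :=
      HasDerivAt.fun_sum fun k _ => (hasDerivAt_Rm s i k).mul (hZd k j s)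
    have e : (∑ k, (Rd s i k * Z s k j + Rm s i k * (X s * Z s) k j))
        = ((Rd s + Rm s * X s) * Z s) i j := by
      rw [Matrix.add_mul, Matrix.add_apply, Matrix.mul_assoc, Finset.sum_add_distrib]
      simp [Matrix.mul_apply]
    have hD : HasDerivAt (fun t => (Rm t * Z t) i j) (((Rd s + Rm s * X s) * Z s) i j) s := by
      rw [← e]
      simpa only [Matrix.mul_apply] using h1
    rw [hD.deriv]
    have e2 : (Rd s + Rm s * X s) * RmT s * (Rm s * Z s) = (Rd s + Rm s * X s) * Z s := by
      rw [Matrix.mul_assoc, ← Matrix.mul_assoc (RmT s), RmT_mul_Rm, Matrix.one_mul]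
    rw [e2]
  · -- shape C
    intro s _
    have hb1 := (hshape s).1
    have hb2 := (hshape s).2.1
    have hb3 := (hshape s).2.2
    have hk1 := key1 s
    have hk3 := key3 s
    have e1 := h₁ s
    have e3 := h₃ s
    have z21 := h21 s
    have z32 := h32 s
    refine ⟨?_, ?_, ?_⟩ <;>
      simp [Matrix.mul_apply, Matrix.add_apply, Fin.sum_univ_four, Rd, Rm, RmT,
        Matrix.vecHead, Matrix.vecTail, Matrix.vecMul, dotProduct,
        hb1, hb2, hb3, z21, z32, e1, e3,
        show (Fin.succ 2 : Fin 4) = 3 from rfl] <;>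
      nlinarith [hk1, hk3]
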